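/- arXiv:1103.4569 — 2 statements merged into one kernel-verified Lean document; each statement's English description precedes it below -/
import Mathlib

section
/- For every integer n ≥ 1 and every s > 0, one has ∫_0^s I_n(t)² dt ≤ (s/(2n))·I_n(s)². -/
open MeasureTheory Real intervalIntegral

/-- Modified Bessel function of the first kind of integer order `n`:
`I_n(t) = (1/π) ∫_0^π exp(t cos α) cos(n α) dα`. -/
noncomputable def besselI (n : ℤ) (t : ℝ) : ℝ :=
  (1 / Real.pi) * ∫ α in (0:ℝ)..Real.pi, Real.exp (t * Real.cos α) * Real.cos ((n : ℝ) * α)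

/-- Modified Bessel function of the second kind of integer order `n`:
`K_n(t) = ∫_0^∞ exp(−t cosh α) cosh(n α) dα`. -/
noncomputable def besselK (n : ℤ) (t : ℝ) : ℝ :=
  ∫ α in Set.Ioi (0:ℝ), Real.exp (-t * Real.cosh α) * Real.cosh ((n : ℝ) * α)

/-!
Expanding `exp (t cos α)` in its Taylor series gives `I_n(t) = ∑ₖ cₖ tᵏ` with
`cₖ = (π k!)⁻¹ ∫₀^π cosᵏ α cos (n α) dα`. The product-to-sum formula
`2 cos α cos ((m+1) α) = cos ((m+2) α) + cos (m α)` shows by induction on `k` that these moments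
are nonnegative and vanish for `k < n`. Hence `I_n(t) / tⁿ` is nondecreasing, so
`I_n(t)² ≤ I_n(s)² (t/s)^{2n}` on `[0, s]`, and integrating gives
`∫₀^s I_n² ≤ s/(2n+1) · I_n(s)² ≤ s/(2n) · I_n(s)²`.
-/

noncomputable def cosMoment (k m : ℕ) : ℝ :=
  ∫ α in (0:ℝ)..π, cos α ^ k * cos (m * α)

theorem cosMoment_zero_zero : cosMoment 0 0 = π := by
  simp [cosMoment]

theorem cosMoment_zero_succ (m : ℕ) : cosMoment 0 (m + 1) = 0 := by
  have hm : ((m + 1 : ℕ) : ℝ) ≠ 0 := by positivity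
  simp only [cosMoment, pow_zero, one_mul]
  rw [integral_comp_mul_left cos hm, integral_cos, sin_nat_mul_pi]
  simp

theorem cosMoment_succ_zero (k : ℕ) : cosMoment (k + 1) 0 = cosMoment k 1 := by
  simp only [cosMoment, pow_succ, Nat.cast_zero, zero_mul, cos_zero, mul_one, Nat.cast_one,
    one_mul]

theorem cosMoment_succ_succ (k m : ℕ) :
    cosMoment (k + 1) (m + 1) = (cosMoment k (m + 2) + cosMoment k m) / 2 := by
  have hint (l : ℕ) : IntervalIntegrable (fun α => cos α ^ k * cos (l * α)) volume 0 π :=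
    (by fun_prop : Continuous fun α => cos α ^ k * cos (l * α)).intervalIntegrable _ _
  have key (α : ℝ) : cos α ^ (k + 1) * cos ((m + 1 : ℕ) * α)
      = (cos α ^ k * cos ((m + 2 : ℕ) * α) + cos α ^ k * cos (m * α)) / 2 := by
    have h₁ : ((m + 2 : ℕ) : ℝ) * α = (m + 1 : ℕ) * α + α := by push_cast; ring
    have h₂ : (m : ℝ) * α = (m + 1 : ℕ) * α - α := by push_cast; ring
    rw [h₁, h₂, cos_add, cos_sub]
    ring
  simp only [cosMoment]
  rw [integral_congr fun α _ => key α, intervalIntegral.integral_div,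
    integral_add (hint _) (hint _)]

theorem cosMoment_nonneg (k m : ℕ) : 0 ≤ cosMoment k m := by
  induction k generalizing m with
  | zero =>
    cases m with
    | zero => exact cosMoment_zero_zero ▸ pi_pos.le
    | succ m => exact (cosMoment_zero_succ m).ge
  | succ k ih =>
    cases m with
    | zero => exact cosMoment_succ_zero k ▸ ih 1
    | succ m => rw [cosMoment_succ_succ]; linarith [ih (m + 2), ih m]

theorem cosMoment_eq_zero_of_lt {k m : ℕ} (h : k < m) : cosMoment k m = 0 := by
  induction k generalizing m with
  | zero =>
    obtain ⟨m, rfl⟩ := Nat.exists_eq_succ_of_ne_zero h.ne'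
    exact cosMoment_zero_succ m
  | succ k ih =>
    obtain ⟨m, rfl⟩ := Nat.exists_eq_succ_of_ne_zero (Nat.ne_zero_of_lt h)
    rw [cosMoment_succ_succ, ih (by omega), ih (by omega)]
    norm_num

noncomputable def besselICoeff (N k : ℕ) : ℝ := cosMoment k N / (π * k.factorial)

theorem besselICoeff_nonneg (N k : ℕ) : 0 ≤ besselICoeff N k :=
  div_nonneg (cosMoment_nonneg k N) (by positivity)

theorem besselICoeff_eq_zero_of_lt {N k : ℕ} (h : k < N) : besselICoeff N k = 0 := by
  rw [besselICoeff, cosMoment_eq_zero_of_lt h, zero_div]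

theorem hasSum_besselI (N : ℕ) (t : ℝ) :
    HasSum (fun k => besselICoeff N k * t ^ k) (besselI N t) := by
  set F : ℕ → ℝ → ℝ := fun k α => t ^ k / k.factorial * (cos α ^ k * cos (N * α))
  have hF_bound (k : ℕ) (α : ℝ) : ‖F k α‖ ≤ |t| ^ k / k.factorial := by
    have h_trig : |cos α ^ k * cos (N * α)| ≤ 1 := by
      rw [abs_mul, abs_pow]
      exact mul_le_one₀ (pow_le_one₀ (abs_nonneg _) (abs_cos_le_one _)) (abs_nonneg _)
        (abs_cos_le_one _)
    rw [norm_mul, norm_div, norm_pow, Real.norm_eq_abs, Real.norm_eq_abs, Nat.abs_cast]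
    exact mul_le_of_le_one_right (by positivity) h_trig
  have hF_sum (α : ℝ) : HasSum (fun k => F k α) (exp (t * cos α) * cos (N * α)) := by
    have := (NormedSpace.expSeries_div_hasSum_exp (t * cos α)).mul_right (cos (N * α))
    rw [← Real.exp_eq_exp_ℝ] at this
    refine this.congr_fun fun k => ?_
    simp only [F]
    ring
  have hF_int : HasSum (fun k => ∫ α in (0:ℝ)..π, F k α)
      (∫ α in (0:ℝ)..π, exp (t * cos α) * cos (N * α)) :=
    hasSum_integral_of_dominated_convergence (fun k _ => |t| ^ k / k.factorial)
      (fun k => (by fun_prop : Continuous (F k)).aestronglyMeasurable)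
      (fun k => .of_forall fun α _ => hF_bound k α)
      (.of_forall fun _ _ => summable_pow_div_factorial |t|) intervalIntegrable_const
      (.of_forall fun α _ => hF_sum α)
  rw [besselI, Int.cast_natCast]
  refine (hF_int.mul_left (1 / π)).congr_fun fun k => ?_
  simp only [F, intervalIntegral.integral_const_mul, besselICoeff, cosMoment]
  field_simp

theorem besselI_nonneg (N : ℕ) {t : ℝ} (ht : 0 ≤ t) : 0 ≤ besselI N t :=
  (hasSum_besselI N t).nonneg fun k => mul_nonneg (besselICoeff_nonneg N k) (pow_nonneg ht k)

theorem continuous_besselI (n : ℤ) : Continuous (besselI n) :=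
  continuous_const.mul <| continuous_parametric_intervalIntegral_of_continuous'
    (f := fun t α => exp (t * cos α) * cos (n * α)) (by fun_prop) 0 π

theorem mul_pow_le_mul_pow_of_hasSum {c : ℕ → ℝ} {N : ℕ} (hc : ∀ k, 0 ≤ c k)
    (hc_lt : ∀ k < N, c k = 0) {t s a b : ℝ} (ha : HasSum (fun k => c k * t ^ k) a)
    (hb : HasSum (fun k => c k * s ^ k) b) (ht : 0 ≤ t) (hts : t ≤ s) :
    a * s ^ N ≤ b * t ^ N := by
  refine hasSum_le (fun k => ?_) (ha.mul_right _) (hb.mul_right _)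
  rcases lt_or_ge k N with hk | hk
  · simp [hc_lt k hk]
  · obtain ⟨j, rfl⟩ := Nat.exists_eq_add_of_le hk
    have hj : t ^ j ≤ s ^ j := pow_le_pow_left₀ ht hts j
    calc c (N + j) * t ^ (N + j) * s ^ N = c (N + j) * (t ^ N * s ^ N) * t ^ j := by ring
      _ ≤ c (N + j) * (t ^ N * s ^ N) * s ^ j := by
          gcongr
          exact mul_nonneg (hc _) (mul_nonneg (pow_nonneg ht N) (pow_nonneg (ht.trans hts) N))
      _ = c (N + j) * s ^ (N + j) * t ^ N := by ring

theorem integral_sq_le_of_abs_mul_pow_le {f : ℝ → ℝ} {s : ℝ} (N : ℕ) (hs : 0 < s)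
    (hf : IntervalIntegrable (fun t => f t ^ 2) volume 0 s)
    (h : ∀ t ∈ Set.Icc 0 s, |f t| * s ^ N ≤ f s * t ^ N) :
    ∫ t in (0:ℝ)..s, f t ^ 2 ≤ s / (2 * N + 1) * f s ^ 2 := by
  have hsN : 0 < s ^ N := pow_pos hs N
  have h_sq : ∀ t ∈ Set.Icc 0 s, f t ^ 2 ≤ (f s / s ^ N) ^ 2 * t ^ (2 * N) := by
    intro t ht
    have h_abs : |f t| ≤ f s * t ^ N / s ^ N := (le_div_iff₀ hsN).2 (h t ht)
    calc f t ^ 2 = |f t| ^ 2 := (sq_abs _).symm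
      _ ≤ (f s * t ^ N / s ^ N) ^ 2 := pow_le_pow_left₀ (abs_nonneg _) h_abs 2
      _ = (f s / s ^ N) ^ 2 * t ^ (2 * N) := by ring
  calc ∫ t in (0:ℝ)..s, f t ^ 2
      ≤ ∫ t in (0:ℝ)..s, (f s / s ^ N) ^ 2 * t ^ (2 * N) :=
        integral_mono_on hs.le hf ((by fun_prop : Continuous _).intervalIntegrable _ _) h_sq
    _ = s / (2 * N + 1) * f s ^ 2 := by
        rw [intervalIntegral.integral_const_mul, integral_pow]
        field_simp
        push_cast
        ring

/-- `∫_0^s I_n(t)² dt ≤ (s/(2n))·I_n(s)²` for `n ≥ 1` and `s > 0`. -/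
theorem integral_besselI_sq_le (n : ℤ) (hn : 1 ≤ n) (s : ℝ) (hs : 0 < s) :
    (∫ t in (0:ℝ)..s, (besselI n t) ^ 2) ≤ (s / (2 * (n : ℝ))) * (besselI n s) ^ 2 := by
  lift n to ℕ using by omega
  have h_ratio (t : ℝ) (ht : t ∈ Set.Icc 0 s) :
      |besselI n t| * s ^ n ≤ besselI n s * t ^ n := by
    rw [abs_of_nonneg (besselI_nonneg n ht.1)]
    exact mul_pow_le_mul_pow_of_hasSum (besselICoeff_nonneg n) (fun _ => besselICoeff_eq_zero_of_lt)
      (hasSum_besselI n t) (hasSum_besselI n s) ht.1 ht.2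
  calc ∫ t in (0:ℝ)..s, besselI n t ^ 2
      ≤ s / (2 * n + 1) * besselI n s ^ 2 :=
        integral_sq_le_of_abs_mul_pow_le n hs
          (((continuous_besselI n).pow 2).intervalIntegrable _ _) h_ratio
    _ ≤ s / (2 * (n : ℤ)) * besselI n s ^ 2 := by
        have hn' : (0 : ℝ) < n := by exact_mod_cast hn
        push_cast
        gcongr
        linarith
end

section
/- For every integer n ≥ 0 and all real numbers 0 < t ≤ M, one has ∫_t^M s·K_{n+1}(s) ds ≤ 2·t·K_n(t) + 4·K_n(t). -/
/-!
Write `s K_{n+1}(s) = ∫_0^∞ s e^{-s cosh α} cosh((n+1)α) dα` and swap the two integrals (Fubini,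
dominated by `M e^{-t cosh α} cosh((n+1)α)`). With `b = cosh α ≥ 1`, the inner integral
`∫_t^M s e^{-sb} ds` is at most `(t+1)/b · e^{-tb}`, while `cosh((n+1)α) ≤ 2 cosh α cosh(nα)`.
The factors `cosh α` cancel, so the double integral is at most `2(t+1) K_n(t)`.
-/

open MeasureTheory Real intervalIntegral

lemma one_add_sq_div_two_le_cosh (x : ℝ) : 1 + x ^ 2 / 2 ≤ cosh x := by
  have h := cosh_two_mul (x / 2)
  rw [show 2 * (x / 2) = x by ring, cosh_sq'] at h
  have hs : (x / 2) ^ 2 ≤ sinh (x / 2) ^ 2 := by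
    rw [← sq_abs, ← sq_abs (sinh _), abs_sinh]
    gcongr
    exact self_le_sinh_iff.2 (abs_nonneg _)
  linarith

lemma cosh_le_exp_abs (x : ℝ) : cosh x ≤ exp |x| := by
  rw [← cosh_abs, ← cosh_add_sinh]
  linarith [sinh_nonneg_iff.2 (abs_nonneg x)]

lemma cosh_add_le_two_mul_cosh_mul_cosh (x y : ℝ) : cosh (x + y) ≤ 2 * cosh x * cosh y := by
  linarith [cosh_add x y, cosh_sub x y, cosh_pos (x - y)]

lemma integral_mul_exp_neg_mul_le {t M b : ℝ} (hM : 0 ≤ M) (hb : 1 ≤ b) :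
    ∫ s in t..M, s * exp (-s * b) ≤ (t + 1) / b * exp (-t * b) := by
  have hb0 : 0 < b := by linarith
  set G : ℝ → ℝ := fun s ↦ -((s * b + 1) / b ^ 2 * exp (-s * b))
  have hG (s : ℝ) : HasDerivAt G (s * exp (-s * b)) s := by
    have hlin : HasDerivAt (fun s ↦ (s * b + 1) / b ^ 2) (1 * b / b ^ 2) s :=
      (((hasDerivAt_id' s).mul_const b).add_const 1).div_const _
    have hexp : HasDerivAt (fun s ↦ exp (-s * b)) (exp (-s * b) * (-1 * b)) s :=
      ((hasDerivAt_id' s).neg.mul_const b).exp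
    refine (hlin.mul hexp).neg.congr_deriv ?_
    field_simp
    ring
  rw [integral_eq_sub_of_hasDerivAt (fun s _ ↦ hG s)
    (Continuous.intervalIntegrable (by fun_prop) _ _)]
  have hGM : G M ≤ 0 := by
    simp only [G, neg_nonpos]
    positivity
  have hGt : -G t ≤ (t + 1) / b * exp (-t * b) := by
    simp only [G, neg_neg]
    refine mul_le_mul_of_nonneg_right ?_ (exp_pos _).le
    rw [div_le_div_iff₀ (by positivity) hb0]
    nlinarith
  linarith

noncomputable def besselKIntegrand (c t α : ℝ) : ℝ := exp (-t * cosh α) * cosh (c * α)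

lemma besselKIntegrand_nonneg (c t α : ℝ) : 0 ≤ besselKIntegrand c t α := by
  unfold besselKIntegrand
  positivity

lemma besselKIntegrand_antitone (c α : ℝ) : Antitone (besselKIntegrand c · α) := by
  intro s t hst
  simp only [besselKIntegrand]
  have := cosh_pos α
  gcongr

lemma integrable_besselKIntegrand (c : ℝ) {t : ℝ} (ht : 0 < t) :
    Integrable (besselKIntegrand c t) := by
  refine ((integrable_exp_neg_mul_sq (by positivity : 0 < t / 4)).const_mul
    (exp (c ^ 2 / t - t))).mono' (by unfold besselKIntegrand; fun_prop) (.of_forall fun α ↦ ?_)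
  -- AM-GM, so that the Gaussian decay of `exp (-t cosh α)` absorbs the growth of `cosh (c α)`
  have hamgm : |c * α| ≤ t * α ^ 2 / 4 + c ^ 2 / t := by
    rw [abs_mul, div_add_div _ _ (by norm_num) ht.ne', le_div_iff₀ (by positivity)]
    have h := sq_nonneg (t * |α| - 2 * |c|)
    rw [sub_sq, mul_pow, mul_pow, sq_abs, sq_abs] at h
    linarith
  have hcosh : -t * cosh α ≤ -t * (1 + α ^ 2 / 2) :=
    mul_le_mul_of_nonpos_left (one_add_sq_div_two_le_cosh α) (by linarith)
  rw [norm_of_nonneg (besselKIntegrand_nonneg c t α), ← exp_add, besselKIntegrand]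
  calc exp (-t * cosh α) * cosh (c * α) ≤ exp (-t * cosh α) * exp |c * α| := by
        gcongr
        exact cosh_le_exp_abs _
    _ ≤ exp (c ^ 2 / t - t + -(t / 4) * α ^ 2) := by
        rw [← exp_add, exp_le_exp]
        linarith

lemma besselK_nonneg (n : ℤ) (t : ℝ) : 0 ≤ besselK n t :=
  setIntegral_nonneg measurableSet_Ioi fun α _ ↦ besselKIntegrand_nonneg n t α

lemma integral_mul_besselKIntegrand_add_one_le (c α : ℝ) {t M : ℝ} (ht : 0 ≤ t) (hM : 0 ≤ M) :
    ∫ s in t..M, s * besselKIntegrand (c + 1) s α ≤ 2 * (t + 1) * besselKIntegrand c t α := by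
  have hcosh := cosh_add_le_two_mul_cosh_mul_cosh α (c * α)
  rw [show α + c * α = (c + 1) * α by ring] at hcosh
  calc ∫ s in t..M, s * besselKIntegrand (c + 1) s α
      = (∫ s in t..M, s * exp (-s * cosh α)) * cosh ((c + 1) * α) := by
        simp only [besselKIntegrand, ← mul_assoc, intervalIntegral.integral_mul_const]
    _ ≤ (t + 1) / cosh α * exp (-t * cosh α) * (2 * cosh α * cosh (c * α)) :=
        mul_le_mul (integral_mul_exp_neg_mul_le hM (one_le_cosh α)) hcosh (cosh_pos _).le
          (by positivity)
    _ = 2 * (t + 1) * besselKIntegrand c t α := by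
        rw [besselKIntegrand]
        field_simp [(cosh_pos α).ne']

lemma integral_Ioc_mul_integral_besselKIntegrand_comm (c : ℝ) {t M : ℝ} (ht : 0 < t) :
    ∫ s in Set.Ioc t M, s * ∫ α in Set.Ioi 0, besselKIntegrand c s α =
      ∫ α in Set.Ioi 0, ∫ s in Set.Ioc t M, s * besselKIntegrand c s α := by
  simp_rw [← MeasureTheory.integral_const_mul]
  refine integral_integral_swap <| Integrable.mono'
    ((integrableOn_const (C := M) measure_Ioc_lt_top.ne).mul_prod
      (integrable_besselKIntegrand c ht).integrableOn)
    (by unfold besselKIntegrand; fun_prop) ?_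
  rw [Measure.prod_restrict]
  filter_upwards [ae_restrict_mem (measurableSet_Ioc.prod measurableSet_Ioi)]
    with ⟨s, α⟩ ⟨⟨hts, hsM⟩, _⟩
  rw [Function.uncurry_apply_pair,
    norm_of_nonneg (mul_nonneg (ht.trans hts).le (besselKIntegrand_nonneg c s α))]
  exact mul_le_mul hsM (besselKIntegrand_antitone c α hts.le) (besselKIntegrand_nonneg c s α)
    (by linarith)

theorem integral_mul_besselK_le_general (n : ℤ) (t M : ℝ) (ht : 0 < t) (htM : t ≤ M) :
    (∫ s in t..M, s * besselK (n + 1) s) ≤ 2 * t * besselK n t + 4 * besselK n t := by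
  have hcast : ((n + 1 : ℤ) : ℝ) = n + 1 := by push_cast; rfl
  calc ∫ s in t..M, s * besselK (n + 1) s
      = ∫ α in Set.Ioi 0, ∫ s in t..M, s * besselKIntegrand (n + 1) s α := by
        simp only [integral_of_le htM, besselK, ← hcast]
        exact integral_Ioc_mul_integral_besselKIntegrand_comm _ ht
    _ ≤ ∫ α in Set.Ioi 0, 2 * (t + 1) * besselKIntegrand n t α :=
        integral_mono_of_nonneg
          (.of_forall fun α ↦ integral_nonneg htM fun s hs ↦
            mul_nonneg (ht.le.trans hs.1) (besselKIntegrand_nonneg _ s α))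
          ((integrable_besselKIntegrand n ht).integrableOn.const_mul _)
          (.of_forall fun α ↦
            integral_mul_besselKIntegrand_add_one_le n α ht.le (ht.le.trans htM))
    _ = 2 * (t + 1) * besselK n t := MeasureTheory.integral_const_mul _ _
    _ ≤ 2 * t * besselK n t + 4 * besselK n t := by linarith [besselK_nonneg n t]

/-- `∫_t^M s·K_{n+1}(s) ds ≤ 2·t·K_n(t) + 4·K_n(t)` for `n ≥ 0` and `0 < t ≤ M`. -/
theorem integral_mul_besselK_le (n : ℤ) (hn : 0 ≤ n) (t M : ℝ) (ht : 0 < t) (htM : t ≤ M) :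
    (∫ s in t..M, s * besselK (n + 1) s) ≤ 2 * t * besselK n t + 4 * besselK n t :=
  integral_mul_besselK_le_general n t M ht htM
end
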